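/- Let S be a complete RN module over ℝ with base (Ω, F, P) and let (G_n)_{n∈ℕ} be a sequence in F̃ with G_n ⊂ H(S), P(G_n) > 0 and Rank_{G_n}(S) ≥ 2 for every n. Then Rank_G(S) ≥ 2, where G = ∪_{n≥1} G_n; indeed, there exist x, y ∈ S that are L⁰-independent on G. -/

import Mathlib

open MeasureTheory Filter Set

noncomputable section

namespace RNM

variable {Ω : Type*} [MeasurableSpace Ω]

/-- `L⁰(F, ℝ)`: equivalence classes of real random variables mod a.e. equality. -/
abbrev L0 (μ : Measure Ω) : Type _ := Ω →ₘ[μ] ℝ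

open Classical in
/-- The equivalence class of the indicator function of a (measurable) set. -/
noncomputable def ind (μ : Measure Ω) (A : Set Ω) : L0 μ :=
  if h : MeasurableSet A then
    AEEqFun.mk (A.indicator fun _ => (1 : ℝ)) (aestronglyMeasurable_const.indicator h)
  else 0

/-- The constant function, as an element of `L⁰`. -/
noncomputable def cst (μ : Measure Ω) (r : ℝ) : L0 μ := AEEqFun.const Ω r

/-- `A ⊂ B` modulo null sets. -/
def aeSub (μ : Measure Ω) (A B : Set Ω) : Prop := μ (A \ B) = 0

/-- `A = B` modulo null sets. -/
def aeEqS (μ : Measure Ω) (A B : Set Ω) : Prop := μ ((A \ B) ∪ (B \ A)) = 0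

variable {μ : Measure Ω} {S : Type*} [AddCommGroup S]

/-- The axioms of a random normed module over ℝ with base `(Ω, F, μ)`: `S` is a left module
over the algebra `L⁰(F,ℝ)` (with module multiplication `sm`) and `nrm` is an `L⁰`-norm. -/
structure IsRNModule (μ : Measure Ω) (sm : L0 μ → S → S) (nrm : S → L0 μ) : Prop where
  smul_add : ∀ ξ x y, sm ξ (x + y) = sm ξ x + sm ξ y
  add_smul : ∀ ξ η x, sm (ξ + η) x = sm ξ x + sm η x
  mul_smul : ∀ ξ η x, sm (ξ * η) x = sm ξ (sm η x)
  one_smul : ∀ x, sm 1 x = x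
  nrm_nonneg : ∀ x, 0 ≤ nrm x
  nrm_smul : ∀ ξ x, nrm (sm ξ x) = |ξ| * nrm x
  nrm_add : ∀ x y, nrm (x + y) ≤ nrm x + nrm y
  nrm_eq_zero : ∀ x, nrm x = 0 → x = 0

/-- `x` and `y` are `L⁰`-independent on `F`. -/
def Indep (sm : L0 μ → S → S) (x y : S) (F : Set Ω) : Prop :=
  ∀ ξ η : L0 μ, sm (ξ * ind μ F) x + sm (η * ind μ F) y = 0 →
    ξ * ind μ F = 0 ∧ η * ind μ F = 0

/-- `Rank_D(S) ≥ 2`. -/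
def RankGe2 (sm : L0 μ → S → S) (D : Set Ω) : Prop := ∃ x y : S, Indep sm x y D

/-- `A_x = [‖x‖ > 0]`. -/
def Aset (nrm : S → L0 μ) (x : S) : Set Ω := {ω | 0 < (nrm x) ω}

/-- `A_{xy} = A_x ∩ A_y`. -/
def Axy (nrm : S → L0 μ) (x y : S) : Set Ω := Aset nrm x ∩ Aset nrm y

/-- `B_{xy} = A_{xy} ∩ A_{x-y}`. -/
def Bxy (nrm : S → L0 μ) (x y : S) : Set Ω := Axy nrm x y ∩ Aset nrm (x - y)

/-- `H` is (a representative of) the support `H(S) = [⋁{‖x‖ : x ∈ S} > 0]`. -/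
def IsSupport (nrm : S → L0 μ) (H : Set Ω) : Prop :=
  MeasurableSet H ∧ (∀ x : S, aeSub μ (Aset nrm x) H) ∧
    ∀ B : Set Ω, MeasurableSet B → aeSub μ B H → 0 < μ B →
      ∃ x : S, 0 < μ (B ∩ Aset nrm x)

/-- A sequence in `S` is Cauchy for the topology of convergence in probability. -/
def CauchyInProb (μ : Measure Ω) (nrm : S → L0 μ) (u : ℕ → S) : Prop :=
  ∀ ε : ℝ, 0 < ε →
    Tendsto (fun p : ℕ × ℕ => μ {ω | ε ≤ |(nrm (u p.1 - u p.2)) ω|}) atTop (nhds 0)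

/-- `u n → x` in probability (i.e. `‖u n - x‖ → 0` in probability). -/
def TendstoInProb (μ : Measure Ω) (nrm : S → L0 μ) (u : ℕ → S) (x : S) : Prop :=
  ∀ ε : ℝ, 0 < ε →
    Tendsto (fun n => μ {ω | ε ≤ |(nrm (u n - x)) ω|}) atTop (nhds 0)

/-- Completeness of a random normed module. -/
def CompleteRN (μ : Measure Ω) (nrm : S → L0 μ) : Prop :=
  ∀ u : ℕ → S, CauchyInProb μ nrm u → ∃ x : S, TendstoInProb μ nrm u x

/-- The random unit sphere `S(1)`. -/
def sphere (nrm : S → L0 μ) : Set S :=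
  {x | ∃ A : Set Ω, MeasurableSet A ∧ 0 < μ A ∧ nrm x = ind μ A}

/-- The random closed unit ball `U(1)`. -/
def ball (nrm : S → L0 μ) : Set S := {x | nrm x ≤ 1}

/-- `ε` is an admissible random convexity parameter on `D`: `ε ≥ 0` and `0 < ε ≤ 2` on `D`. -/
def Admissible (μ : Measure Ω) (D : Set Ω) (ε : L0 μ) : Prop :=
  0 ≤ ε ∧ ∀ᵐ ω ∂μ, ω ∈ D → 0 < ε ω ∧ ε ω ≤ 2

/-- midpoint `(x+y)/2`. -/
def mid (μ : Measure Ω) (sm : L0 μ → S → S) (x y : S) : S := sm (cst μ (1/2)) (x + y)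

/-- The set whose infimum (in the a.s. order of `L⁰`) is the modulus of random
convexity `δ_D(ε)`. -/
def modSet (μ : Measure Ω) (sm : L0 μ → S → S) (nrm : S → L0 μ) (D : Set Ω) (ε : L0 μ) :
    Set (L0 μ) :=
  {z | ∃ x ∈ sphere nrm, ∃ y ∈ sphere nrm, aeSub μ D (Bxy nrm x y) ∧
    ε * ind μ D ≤ ind μ D * nrm (x - y) ∧
    z = ind μ D - ind μ D * nrm (mid μ sm x y)}

/-- `S` is random uniformly convex: `δ_{H(S)}(ε) > 0` on `H(S)` for every admissible `ε`. -/
def RandomUniformlyConvex (μ : Measure Ω) (sm : L0 μ → S → S) (nrm : S → L0 μ)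
    (H : Set Ω) : Prop :=
  ∀ ε : L0 μ, Admissible μ H ε → ∀ d : L0 μ, IsGLB (modSet μ sm nrm H ε) d →
    ∀ᵐ ω ∂μ, ω ∈ H → 0 < d ω

/-- `G` is (a representative of) `G(S)`. -/
def IsGSet (μ : Measure Ω) (sm : L0 μ → S → S) (H G : Set Ω) : Prop :=
  MeasurableSet G ∧ aeSub μ G H ∧ 0 < μ G ∧ RankGe2 sm G ∧
    ∀ D : Set Ω, MeasurableSet D → aeSub μ D (H \ G) → 0 < μ D → ¬ RankGe2 sm D


/-!
Disjointify the `G n` into `D n` and choose `x n, y n` independent on `G n`, hence on `D n`.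
The partial sums `∑_{n<N} I_{D n} x n` are Cauchy in probability, because their increments vanish
off the tails `⋃_{i ≥ M} D i`, whose measures tend to `0`; by completeness they converge to some
`x` with `I_{D n} x = I_{D n} x n` for every `n`, and likewise for `y`. Independence is local, so
`x, y` are independent on each `D n` and therefore on `⋃ D n = ⋃ G n`.
-/

open Function Topology

section Indicator

lemma ind_ae_eq {A : Set Ω} (hA : MeasurableSet A) :
    ⇑(ind μ A) =ᵐ[μ] A.indicator fun _ => (1 : ℝ) := by
  rw [ind, dif_pos hA]
  exact AEEqFun.coeFn_mk _ _

lemma ind_empty : ind μ (∅ : Set Ω) = 0 := by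
  refine AEEqFun.ext ?_
  filter_upwards [ind_ae_eq (μ := μ) MeasurableSet.empty, AEEqFun.coeFn_zero (μ := μ) (β := ℝ)]
    with ω h1 h2
  simp [h1, h2]

lemma ind_mul_ind {A B : Set Ω} (hA : MeasurableSet A) (hB : MeasurableSet B) :
    ind μ A * ind μ B = ind μ (A ∩ B) := by
  refine AEEqFun.ext ?_
  filter_upwards [AEEqFun.coeFn_mul (ind μ A) (ind μ B), ind_ae_eq (μ := μ) hA,
    ind_ae_eq (μ := μ) hB, ind_ae_eq (μ := μ) (hA.inter hB)] with ω h1 h2 h3 h4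
  rw [h1, Pi.mul_apply, h2, h3, h4]
  by_cases hωA : ω ∈ A <;> by_cases hωB : ω ∈ B <;> simp [hωA, hωB]

lemma mul_ind_eq_zero_iff {ξ : L0 μ} {A : Set Ω} (hA : MeasurableSet A) :
    ξ * ind μ A = 0 ↔ ∀ᵐ ω ∂μ, ω ∈ A → ξ ω = 0 := by
  have key : ∀ᵐ ω ∂μ, ((ξ * ind μ A) ω = (0 : L0 μ) ω ↔ (ω ∈ A → ξ ω = 0)) := by
    filter_upwards [AEEqFun.coeFn_mul ξ (ind μ A), ind_ae_eq (μ := μ) hA,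
      AEEqFun.coeFn_zero (μ := μ) (β := ℝ)] with ω h1 h2 h3
    rw [h1, h3, Pi.mul_apply, h2]
    by_cases hω : ω ∈ A <;> simp [hω]
  rw [AEEqFun.ext_iff]
  exact eventually_congr key

lemma mul_ind_iUnion_eq_zero {ξ : L0 μ} {D : ℕ → Set Ω} (hD : ∀ n, MeasurableSet (D n))
    (hξ : ∀ n, ξ * ind μ (D n) = 0) : ξ * ind μ (⋃ n, D n) = 0 := by
  simp only [mul_ind_eq_zero_iff (hD _)] at hξ
  rw [mul_ind_eq_zero_iff (MeasurableSet.iUnion hD)]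
  filter_upwards [ae_all_iff.2 hξ] with ω hω hmem
  obtain ⟨n, hn⟩ := mem_iUnion.1 hmem
  exact hω n hn

end Indicator

namespace IsRNModule

variable {sm : L0 μ → S → S} {nrm : S → L0 μ}

lemma zero_smul (h : IsRNModule μ sm nrm) (x : S) : sm 0 x = 0 :=
  add_eq_left.1 (show sm 0 x + sm 0 x = sm 0 x by rw [← h.add_smul, add_zero])

lemma smul_zero (h : IsRNModule μ sm nrm) (ξ : L0 μ) : sm ξ 0 = 0 :=
  add_eq_left.1 (show sm ξ 0 + sm ξ 0 = sm ξ 0 by rw [← h.smul_add, add_zero])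

lemma smul_neg (h : IsRNModule μ sm nrm) (ξ : L0 μ) (x : S) : sm ξ (-x) = -sm ξ x :=
  eq_neg_of_add_eq_zero_left (by rw [← h.smul_add, neg_add_cancel, h.smul_zero])

lemma smul_sub (h : IsRNModule μ sm nrm) (ξ : L0 μ) (x y : S) :
    sm ξ (x - y) = sm ξ x - sm ξ y := by
  rw [sub_eq_add_neg, h.smul_add, h.smul_neg, sub_eq_add_neg]

lemma smul_finset_sum (h : IsRNModule μ sm nrm) (ξ : L0 μ) (s : Finset ℕ) (f : ℕ → S) :
    sm ξ (∑ i ∈ s, f i) = ∑ i ∈ s, sm ξ (f i) := by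
  classical
  induction s using Finset.induction_on with
  | empty => simpa using h.smul_zero ξ
  | insert a s hnot ih => rw [Finset.sum_insert hnot, h.smul_add, ih, Finset.sum_insert hnot]

lemma nrm_smul_ae_eq (h : IsRNModule μ sm nrm) (ξ : L0 μ) (x : S) :
    ⇑(nrm (sm ξ x)) =ᵐ[μ] fun ω => |ξ ω| * nrm x ω := by
  rw [h.nrm_smul]
  filter_upwards [AEEqFun.coeFn_mul |ξ| (nrm x), AEEqFun.coeFn_abs ξ] with ω h1 h2
  rw [h1, Pi.mul_apply, h2]

lemma nrm_smul_ind_ae_eq (h : IsRNModule μ sm nrm) {A : Set Ω} (hA : MeasurableSet A) (x : S) :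
    ⇑(nrm (sm (ind μ A) x)) =ᵐ[μ] A.indicator ⇑(nrm x) := by
  filter_upwards [h.nrm_smul_ae_eq (ind μ A) x, ind_ae_eq (μ := μ) hA] with ω h1 h2
  rw [h1, h2]
  by_cases hω : ω ∈ A <;> simp [hω]

lemma nrm_neg (h : IsRNModule μ sm nrm) (x : S) : nrm (-x) = nrm x := by
  have hneg : sm (-1) x = -x :=
    eq_neg_of_add_eq_zero_left <| by
      simpa only [h.one_smul] using
        show sm (-1) x + sm 1 x = 0 by rw [← h.add_smul, neg_add_cancel, h.zero_smul]
  refine AEEqFun.ext ?_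
  filter_upwards [hneg ▸ h.nrm_smul_ae_eq (-1) x, AEEqFun.coeFn_neg (1 : L0 μ),
    AEEqFun.coeFn_one (μ := μ) (β := ℝ)] with ω h1 h2 h3
  rw [h1, h2, Pi.neg_apply, h3]
  simp

lemma nrm_sub_comm (h : IsRNModule μ sm nrm) (x y : S) : nrm (x - y) = nrm (y - x) := by
  rw [← h.nrm_neg, neg_sub]

lemma ae_nrm_nonneg (h : IsRNModule μ sm nrm) (x : S) : ∀ᵐ ω ∂μ, 0 ≤ nrm x ω := by
  filter_upwards [AEEqFun.coeFn_le.2 (h.nrm_nonneg x), AEEqFun.coeFn_zero (μ := μ) (β := ℝ)]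
    with ω h1 h2
  rwa [h2] at h1

lemma ae_nrm_sum_le (h : IsRNModule μ sm nrm) (s : Finset ℕ) (f : ℕ → S) :
    ∀ᵐ ω ∂μ, nrm (∑ i ∈ s, f i) ω ≤ ∑ i ∈ s, nrm (f i) ω := by
  classical
  induction s using Finset.induction_on with
  | empty =>
    have h0 : ⇑(nrm (0 : S)) =ᵐ[μ] fun ω => |(0 : L0 μ) ω| * nrm 0 ω := by
      simpa only [h.zero_smul] using h.nrm_smul_ae_eq (0 : L0 μ) (0 : S)
    filter_upwards [h0, AEEqFun.coeFn_zero (μ := μ) (β := ℝ)] with ω h1 h2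
    rw [Finset.sum_empty, Finset.sum_empty, h1, h2, Pi.zero_apply, abs_zero, zero_mul]
  | insert a s hnot ih =>
    filter_upwards [AEEqFun.coeFn_le.2 (h.nrm_add (f a) (∑ i ∈ s, f i)), ih,
      AEEqFun.coeFn_add (nrm (f a)) (nrm (∑ i ∈ s, f i))] with ω h1 h2 h3
    rw [Finset.sum_insert hnot, Finset.sum_insert hnot]
    calc nrm (f a + ∑ i ∈ s, f i) ω ≤ (nrm (f a) + nrm (∑ i ∈ s, f i)) ω := h1
      _ = nrm (f a) ω + nrm (∑ i ∈ s, f i) ω := h3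
      _ ≤ nrm (f a) ω + ∑ i ∈ s, nrm (f i) ω := by gcongr

lemma eq_zero_of_nrm_ae_eq_zero (h : IsRNModule μ sm nrm) {x : S} (hx : ⇑(nrm x) =ᵐ[μ] 0) :
    x = 0 :=
  h.nrm_eq_zero x (AEEqFun.ext (hx.trans AEEqFun.coeFn_zero.symm))

end IsRNModule

section Gluing

variable {sm : L0 μ → S → S} {nrm : S → L0 μ}

lemma ae_eq_zero_of_abs_le_of_tendstoInMeasure {f : Ω → ℝ} {g : ℕ → Ω → ℝ}
    (hg : TendstoInMeasure μ g atTop 0) (hfg : ∀ᶠ n in atTop, ∀ᵐ ω ∂μ, |f ω| ≤ |g n ω|) :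
    f =ᵐ[μ] 0 := by
  obtain ⟨N, hN⟩ := eventually_atTop.1 hfg
  obtain ⟨ns, hns, hlim⟩ := hg.exists_seq_tendsto_ae
  have hle : ∀ᵐ ω ∂μ, ∀ k, |f ω| ≤ |g (ns (k + N)) ω| :=
    ae_all_iff.2 fun k => hN _ (le_add_self.trans (hns.id_le _))
  filter_upwards [hlim, hle] with ω hω hωle
  have hlim' : Tendsto (fun k => |g (ns (k + N)) ω|) atTop (𝓝 0) := by
    simpa using (hω.comp (tendsto_add_atTop_nat N)).abs
  exact abs_eq_zero.1 (le_antisymm (ge_of_tendsto' hlim' hωle) (abs_nonneg _))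

lemma TendstoInProb.tendstoInMeasure {u : ℕ → S} {x : S} (hu : TendstoInProb μ nrm u x) :
    TendstoInMeasure μ (fun n => ⇑(nrm (u n - x))) atTop 0 :=
  tendstoInMeasure_iff_norm.2 fun ε hε => by
    simpa only [Pi.zero_apply, sub_zero, Real.norm_eq_abs] using hu ε hε

lemma TendstoInProb.smul_ind_eq (h : IsRNModule μ sm nrm) {u : ℕ → S} {x : S}
    (hu : TendstoInProb μ nrm u x) {A : Set Ω} (hA : MeasurableSet A) {c : S}
    (hc : ∀ᶠ N in atTop, sm (ind μ A) (u N) = c) : sm (ind μ A) x = c := by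
  have hle : ∀ᶠ N in atTop,
      ∀ᵐ ω ∂μ, |nrm (sm (ind μ A) x - c) ω| ≤ |nrm (u N - x) ω| := by
    filter_upwards [hc] with N hN
    have hdiff : sm (ind μ A) x - c = -sm (ind μ A) (u N - x) := by
      rw [h.smul_sub, hN]
      abel
    rw [hdiff, h.nrm_neg]
    filter_upwards [h.nrm_smul_ind_ae_eq hA (u N - x)] with ω hω
    rw [hω]
    by_cases hωA : ω ∈ A <;> simp [hωA]
  exact sub_eq_zero.1 <|
    h.eq_zero_of_nrm_ae_eq_zero (ae_eq_zero_of_abs_le_of_tendstoInMeasure hu.tendstoInMeasure hle)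

lemma ae_nrm_sum_smul_ind_eq_zero (h : IsRNModule μ sm nrm) {D : ℕ → Set Ω}
    (hD : ∀ n, MeasurableSet (D n)) (z : ℕ → S) (s : Finset ℕ) :
    ∀ᵐ ω ∂μ, ω ∉ ⋃ n ∈ s, D n → nrm (∑ n ∈ s, sm (ind μ (D n)) (z n)) ω = 0 := by
  filter_upwards [h.ae_nrm_sum_le s _, h.ae_nrm_nonneg (∑ n ∈ s, sm (ind μ (D n)) (z n)),
    ae_all_iff.2 fun n => h.nrm_smul_ind_ae_eq (hD n) (z n)] with ω hle hnonneg hind hω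
  refine le_antisymm (hle.trans_eq (Finset.sum_eq_zero fun n hn => ?_)) hnonneg
  rw [hind n, indicator_of_notMem fun hωD => hω (mem_iUnion₂.2 ⟨n, hn, hωD⟩)]

lemma cauchyInProb_sum_smul_ind [IsFiniteMeasure μ] (h : IsRNModule μ sm nrm) {D : ℕ → Set Ω}
    (hD : ∀ n, MeasurableSet (D n)) (hdisj : Pairwise (Disjoint on D)) (z : ℕ → S) :
    CauchyInProb μ nrm fun N => ∑ n ∈ Finset.range N, sm (ind μ (D n)) (z n) := by
  intro ε hε
  set w : ℕ → S := fun N => ∑ n ∈ Finset.range N, sm (ind μ (D n)) (z n)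
  have htail : ∀ M N, M ≤ N → ∀ᵐ ω ∂μ, ω ∉ ⋃ i ≥ M, D i → nrm (w N - w M) ω = 0 := by
    intro M N hMN
    simp only [w, ← Finset.sum_Ico_eq_sub _ hMN]
    filter_upwards [ae_nrm_sum_smul_ind_eq_zero h hD z (Finset.Ico M N)] with ω hω hωT
    refine hω fun hmem => hωT ?_
    obtain ⟨n, hn, hωD⟩ := mem_iUnion₂.1 hmem
    exact mem_iUnion₂.2 ⟨n, (Finset.mem_Ico.1 hn).1, hωD⟩
  have hbound : ∀ p : ℕ × ℕ,
      μ {ω | ε ≤ |nrm (w p.1 - w p.2) ω|} ≤ μ (⋃ i ≥ min p.1 p.2, D i) := by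
    rintro ⟨M, N⟩
    have hvanish : ∀ᵐ ω ∂μ, ω ∉ ⋃ i ≥ min M N, D i → nrm (w M - w N) ω = 0 := by
      rcases le_total M N with hMN | hNM
      · rw [min_eq_left hMN, h.nrm_sub_comm]
        exact htail M N hMN
      · rw [min_eq_right hNM]
        exact htail N M hNM
    refine measure_mono_ae ?_
    filter_upwards [hvanish] with ω hω hωε
    by_contra hωT
    have hε' : ε ≤ |nrm (w M - w N) ω| := hωε
    rw [hω hωT, abs_zero] at hε'
    exact hε.not_ge hε'
  have hmin : Tendsto (fun p : ℕ × ℕ => min p.1 p.2) atTop atTop :=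
    tendsto_atTop_atTop.2 fun b => ⟨(b, b), fun p hp => le_min hp.1 hp.2⟩
  exact tendsto_of_tendsto_of_tendsto_of_le_of_le tendsto_const_nhds
    ((tendsto_measure_biUnion_Ici_zero_of_pairwise_disjoint
      (fun n => (hD n).nullMeasurableSet) hdisj).comp hmin) (fun _ => zero_le) hbound

lemma exists_smul_ind_eq [IsFiniteMeasure μ] (h : IsRNModule μ sm nrm) (hcomp : CompleteRN μ nrm)
    {D : ℕ → Set Ω} (hD : ∀ n, MeasurableSet (D n)) (hdisj : Pairwise (Disjoint on D))
    (z : ℕ → S) : ∃ x, ∀ n, sm (ind μ (D n)) x = sm (ind μ (D n)) (z n) := by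
  obtain ⟨x, hx⟩ := hcomp _ (cauchyInProb_sum_smul_ind h hD hdisj z)
  refine ⟨x, fun n => hx.smul_ind_eq h (hD n) (eventually_atTop.2 ⟨n + 1, fun N hN => ?_⟩)⟩
  rw [h.smul_finset_sum, Finset.sum_eq_single_of_mem n (Finset.mem_range.2 (by omega))]
  · rw [← h.mul_smul, ind_mul_ind (hD n) (hD n), inter_self]
  · intro k _ hkn
    rw [← h.mul_smul, ind_mul_ind (hD n) (hD k), (hdisj hkn.symm).inter_eq, ind_empty,
      h.zero_smul]

end Gluing

section Independence

variable {sm : L0 μ → S → S} {nrm : S → L0 μ} {x y : S}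

lemma Indep.mono {D F : Set Ω} (hD : MeasurableSet D) (hF : MeasurableSet F) (hDF : D ⊆ F)
    (hind : Indep sm x y F) : Indep sm x y D := by
  have hmul : ∀ ξ : L0 μ, ξ * ind μ D * ind μ F = ξ * ind μ D := fun ξ => by
    rw [mul_assoc, ind_mul_ind hD hF, inter_eq_left.2 hDF]
  intro ξ η hξη
  simpa only [hmul] using hind (ξ * ind μ D) (η * ind μ D) (by rwa [hmul, hmul])

lemma Indep.of_smul_ind_eq (h : IsRNModule μ sm nrm) {F : Set Ω} {x' y' : S}
    (hx : sm (ind μ F) x = sm (ind μ F) x') (hy : sm (ind μ F) y = sm (ind μ F) y')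
    (hind : Indep sm x y F) : Indep sm x' y' F := by
  intro ξ η hξη
  apply hind ξ η
  rwa [h.mul_smul, h.mul_smul, hx, hy, ← h.mul_smul, ← h.mul_smul]

lemma indep_iUnion (h : IsRNModule μ sm nrm) {D : ℕ → Set Ω} (hD : ∀ n, MeasurableSet (D n))
    (hind : ∀ n, Indep sm x y (D n)) : Indep sm x y (⋃ n, D n) := by
  have hrestrict : ∀ n (ξ : L0 μ), ind μ (D n) * (ξ * ind μ (⋃ n, D n)) = ξ * ind μ (D n) :=
    fun n ξ => by
      rw [mul_left_comm, ind_mul_ind (hD n) (MeasurableSet.iUnion hD),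
        inter_eq_left.2 (subset_iUnion D n)]
  intro ξ η hξη
  have hpiece : ∀ n, ξ * ind μ (D n) = 0 ∧ η * ind μ (D n) = 0 := fun n => by
    refine hind n ξ η ?_
    have := congrArg (sm (ind μ (D n))) hξη
    rwa [h.smul_add, ← h.mul_smul, ← h.mul_smul, hrestrict, hrestrict, h.smul_zero] at this
  exact ⟨mul_ind_iUnion_eq_zero hD fun n => (hpiece n).1,
    mul_ind_iUnion_eq_zero hD fun n => (hpiece n).2⟩

end Independence

theorem rankGe2_iUnion_general {Ω : Type*} [MeasurableSpace Ω] (μ : Measure Ω)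
    [IsProbabilityMeasure μ] {S : Type*} [AddCommGroup S]
    (sm : L0 μ → S → S) (nrm : S → L0 μ) (hRN : IsRNModule μ sm nrm)
    (hcomp : CompleteRN μ nrm)
    (G : ℕ → Set Ω) (hGm : ∀ n, MeasurableSet (G n)) (hGrk : ∀ n, RankGe2 sm (G n)) :
    ∃ x y : S, Indep sm x y (⋃ n, G n) := by
  have hD : ∀ n, MeasurableSet (disjointed G n) := MeasurableSet.disjointed hGm
  choose xs ys hxys using hGrk
  obtain ⟨x, hx⟩ := exists_smul_ind_eq hRN hcomp hD (disjoint_disjointed G) xs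
  obtain ⟨y, hy⟩ := exists_smul_ind_eq hRN hcomp hD (disjoint_disjointed G) ys
  refine ⟨x, y, ?_⟩
  rw [← iUnion_disjointed]
  exact indep_iUnion hRN hD fun n =>
    ((hxys n).mono (hD n) (hGm n) (disjointed_subset G n)).of_smul_ind_eq hRN
      (hx n).symm (hy n).symm

/-- If `Rank_{G_n}(S) ≥ 2` for each member of a sequence `(G_n)` of positive-probability
subsets of `H(S)`, then `Rank_{∪ G_n}(S) ≥ 2`: there exist `x, y ∈ S` which are
`L⁰`-independent on `∪_{n ≥ 1} G_n`. -/
theorem rankGe2_iUnion {Ω : Type*} [MeasurableSpace Ω] (μ : Measure Ω)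
    [IsProbabilityMeasure μ] {S : Type*} [AddCommGroup S]
    (sm : L0 μ → S → S) (nrm : S → L0 μ) (hRN : IsRNModule μ sm nrm)
    (hcomp : CompleteRN μ nrm) (H : Set Ω) (hH : IsSupport nrm H)
    (G : ℕ → Set Ω) (hGm : ∀ n, MeasurableSet (G n)) (hGH : ∀ n, aeSub μ (G n) H)
    (hGpos : ∀ n, 0 < μ (G n)) (hGrk : ∀ n, RankGe2 sm (G n)) :
    ∃ x y : S, Indep sm x y (⋃ n, G n) :=
  rankGe2_iUnion_general μ sm nrm hRN hcomp G hGm hGrk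

end RNM
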